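/- Let l ≥ 3 and d ≥ 1, and let M(l,d) be the PBD on V = {1,...,l+d} with blocks L = {1,...,l} and all 2-element subsets {i,j} with l+1 ≤ j ≤ l+d, i < j. There exists an element f of the Wilson monoid W(l,d) with image exactly X ⊆ V if and only if L ⊆ X or |X| ≤ d + 1. -/

import Mathlib

/-- A subsystem of a pairwise balanced design. -/
def Subsys {S : Type*} (L : Set (Set S)) (X : Set S) : Prop :=
  ∀ x ∈ X, ∀ y ∈ X, x ≠ y → ∀ B ∈ L, x ∈ B → y ∈ B → B ⊆ X

/-- The domain of a partial function. -/
def pDom {S T : Type*} (f : S → Option T) : Set S := {x | f x ≠ none}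

/-- The image of a partial function. -/
def pIm {S T : Type*} (f : S → Option T) : Set T := {y | ∃ x, f x = some y}

/-- Image of a set under a partial function (only defined points count). -/
def imOn {S T : Type*} (f : S → Option T) (B : Set S) : Set T :=
  {y | ∃ x ∈ B, f x = some y}

/-- Composition of partial functions: first `f`, then `g`. -/
def pComp {S T U : Type*} (g : T → Option U) (f : S → Option T) : S → Option U :=
  fun x => (f x).bind g

/-- The blocks of the PBD `M(l,d)`: the set `L` of size `l`, together with all
two-element sets having at least one point outside `L` (these are exactly the
pairs `{i, j}` with `l + 1 ≤ j ≤ l + d`, `i < j`). -/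
def MldBlocks {V : Type*} (L : Set V) : Set (Set V) :=
  {L} ∪ {B | ∃ x y : V, x ≠ y ∧ (x ∉ L ∨ y ∉ L) ∧ B = {x, y}}

/-- The open sets of `M(l,d)`: subsets of `D = Lᶜ`, and sets containing at
least `l - 1` points of `L`. -/
def OpenMld {V : Type*} (L : Set V) (l : ℕ) (X : Set V) : Prop :=
  X ⊆ Lᶜ ∨ l - 1 ≤ (L ∩ X).ncard

/-- The restriction of the partial function `f` to `L` is a permutation of `L`. -/
def PermOnL {V : Type*} (L : Set V) (f : V → Option V) : Prop :=
  (∀ x ∈ L, ∃ y ∈ L, f x = some y) ∧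
  (∀ x ∈ L, ∀ y ∈ L, f x = f y → x = y) ∧
  (∀ y ∈ L, ∃ x ∈ L, f x = some y)

/-- Membership in the Wilson monoid `W(l,d)` (characterization): the domain is
open; if `L ⊄ Dom(f)` then `|f(L ∩ Dom f)| ≤ 1`; if `L ⊆ Dom(f)` then
`|f(L)| = 1` or `f` restricted to `L` is a permutation of `L`. -/
def MemW {V : Type*} (L : Set V) (l : ℕ) (f : V → Option V) : Prop :=
  OpenMld L l (pDom f) ∧
    (¬L ⊆ pDom f → (imOn f L).ncard ≤ 1) ∧
    (L ⊆ pDom f → ((imOn f L).ncard = 1 ∨ PermOnL L f))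

/-!
The image of an element of `W(l,d)` is the union of the images of `L` and of `D = Lᶜ`. The
image of `D` has at most `d` points, and `L` either goes onto a single point (or none), or onto
`L` itself. Conversely, the partial identity on `X` lies in `W(l,d)` when `L ⊆ X`, and when
`|X| ≤ d + 1` one collapses `L` onto one point of `X` and covers the remaining at most `d`
points from `D`.
-/

open Set

section PartialFunction

variable {S T : Type*}

lemma pIm_eq_imOn_union_imOn_compl (f : S → Option T) (B : Set S) :
    pIm f = imOn f B ∪ imOn f Bᶜ := by
  ext y
  constructor
  · rintro ⟨x, hx⟩
    by_cases hxB : x ∈ B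
    · exact Or.inl ⟨x, hxB, hx⟩
    · exact Or.inr ⟨x, hxB, hx⟩
  · rintro (⟨x, -, hx⟩ | ⟨x, -, hx⟩) <;> exact ⟨x, hx⟩

lemma ncard_imOn_le (f : S → Option T) {B : Set S} (hB : B.Finite) :
    (imOn f B).ncard ≤ B.ncard :=
  calc (imOn f B).ncard ≤ (f '' B).ncard :=
        ncard_le_ncard_of_injOn some (fun _ ⟨x, hxB, hx⟩ => ⟨x, hxB, hx⟩)
          (Option.some_injective _).injOn (hB.image f)
    _ ≤ B.ncard := ncard_image_le hB

lemma imOn_eq_pIm_of_pDom_subset {f : S → Option T} {B : Set S} (h : pDom f ⊆ B) :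
    imOn f B = pIm f := by
  ext y
  exact ⟨fun ⟨x, _, hx⟩ => ⟨x, hx⟩, fun ⟨x, hx⟩ => ⟨x, h (by simp [pDom, hx]), hx⟩⟩

lemma imOn_congr {f g : S → Option T} {B : Set S} (h : ∀ x ∈ B, f x = g x) :
    imOn f B = imOn g B := by
  ext y
  constructor <;> rintro ⟨x, hxB, hx⟩ <;> exact ⟨x, hxB, by rwa [h x hxB] at *⟩

lemma imOn_eq_singleton {f : S → Option T} {B : Set S} {y : T} (hB : B.Nonempty)
    (h : ∀ x ∈ B, f x = some y) : imOn f B = {y} := by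
  ext z
  constructor
  · rintro ⟨x, hxB, hx⟩
    exact (Option.some_injective _ ((h x hxB).symm.trans hx)).symm
  · rintro rfl
    obtain ⟨x, hxB⟩ := hB
    exact ⟨x, hxB, h x hxB⟩

lemma exists_pDom_subset_pIm_eq {A : Set T} {D : Set S} (hA : A.Finite)
    (h : A.encard ≤ D.encard) : ∃ g : S → Option T, pDom g ⊆ D ∧ pIm g = A := by
  classical
  rcases A.eq_empty_or_nonempty with rfl | ⟨a, -⟩
  · exact ⟨fun _ => none, by simp [pDom], by simp [pIm]⟩
  have : Nonempty T := ⟨a⟩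
  obtain ⟨D', hD'D, hD'⟩ := exists_subset_encard_eq h
  have hD'fin : D'.Finite := encard_lt_top_iff.mp (hD' ▸ hA.encard_lt_top)
  obtain ⟨φ, hφ⟩ := hD'fin.exists_bijOn_of_encard_eq hD'
  refine ⟨fun x => if x ∈ D' then some (φ x) else none, fun x hx => hD'D ?_, ?_⟩
  · by_contra hxD'
    simp [pDom, hxD'] at hx
  · rw [← hφ.image_eq]
    ext y
    simp [pIm]

end PartialFunction

section WilsonMonoid

variable {V : Type*} {L X : Set V} {l : ℕ} {f : V → Option V}

lemma PermOnL.subset_pDom (hf : PermOnL L f) : L ⊆ pDom f := fun x hx => by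
  obtain ⟨y, -, hy⟩ := hf.1 x hx
  simp [pDom, hy]

lemma PermOnL.subset_pIm (hf : PermOnL L f) : L ⊆ pIm f := fun y hy => by
  obtain ⟨x, -, hx⟩ := hf.2.2 y hy
  exact ⟨x, hx⟩

lemma openMld_of_subset (hL : L.ncard = l) (h : L ⊆ X) : OpenMld L l X :=
  Or.inr (by rw [inter_eq_self_of_subset_left h, hL]; omega)

lemma memW_of_permOnL (hL : L.ncard = l) (hf : PermOnL L f) : MemW L l f :=
  ⟨openMld_of_subset hL hf.subset_pDom, fun h => absurd hf.subset_pDom h, fun _ => Or.inr hf⟩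

lemma memW_of_eq_some_on {y : V} (hL : L.ncard = l) (hLne : L.Nonempty)
    (hf : ∀ x ∈ L, f x = some y) : MemW L l f :=
  have hLD : L ⊆ pDom f := fun x hx => by simp [pDom, hf x hx]
  ⟨openMld_of_subset hL hLD, fun h => absurd hLD h,
    fun _ => Or.inl (by rw [imOn_eq_singleton hLne hf, ncard_singleton])⟩

lemma memW_none : MemW L l (fun _ => none) := by
  refine ⟨Or.inl (by simp [pDom]), fun _ => by simp [imOn], fun h => Or.inr ?_⟩
  obtain rfl : L = ∅ := subset_empty_iff.mp (by simpa [pDom] using h)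
  simp [PermOnL]

lemma MemW.subset_pIm_or_ncard_pIm_le [Finite V] (hf : MemW L l f) :
    L ⊆ pIm f ∨ (pIm f).ncard ≤ Lᶜ.ncard + 1 := by
  have hL : PermOnL L f ∨ (imOn f L).ncard ≤ 1 := by
    by_cases hLD : L ⊆ pDom f
    · exact (hf.2.2 hLD).symm.imp id le_of_eq
    · exact Or.inr (hf.2.1 hLD)
  refine hL.imp PermOnL.subset_pIm fun h => ?_
  rw [pIm_eq_imOn_union_imOn_compl f L]
  calc _ ≤ (imOn f L).ncard + (imOn f Lᶜ).ncard := ncard_union_le _ _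
    _ ≤ 1 + Lᶜ.ncard := add_le_add h (ncard_imOn_le f (toFinite _))
    _ = Lᶜ.ncard + 1 := add_comm _ _

lemma exists_memW_pIm_eq_of_subset (hL : L.ncard = l) (hLX : L ⊆ X) :
    ∃ f, MemW L l f ∧ pIm f = X := by
  classical
  refine ⟨fun v => if v ∈ X then some v else none,
    memW_of_permOnL hL ⟨fun x hx => ⟨x, hx, if_pos (hLX hx)⟩, fun x hx y hy hxy => ?_,
      fun y hy => ⟨y, hy, if_pos (hLX hy)⟩⟩, ?_⟩
  · simpa [hLX hx, hLX hy] using hxy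
  · ext y
    simp [pIm]

lemma exists_memW_pIm_eq_of_ncard_le [Finite V] (hL : L.ncard = l) (hLne : L.Nonempty)
    (hX : X.ncard ≤ Lᶜ.ncard + 1) : ∃ f, MemW L l f ∧ pIm f = X := by
  classical
  rcases X.eq_empty_or_nonempty with rfl | ⟨x₀, hx₀⟩
  · exact ⟨fun _ => none, memW_none, by simp [pIm]⟩
  have hcard : (X \ {x₀}).encard ≤ Lᶜ.encard := by
    rw [← (toFinite (X \ {x₀})).cast_ncard_eq, ← (toFinite Lᶜ).cast_ncard_eq,
      ncard_sdiff_singleton_of_mem hx₀]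
    norm_cast
    omega
  obtain ⟨g, hgD, hgX⟩ := exists_pDom_subset_pIm_eq (toFinite _) hcard
  refine ⟨fun v => if v ∈ L then some x₀ else g v,
    memW_of_eq_some_on hL hLne fun x hx => if_pos hx, ?_⟩
  rw [pIm_eq_imOn_union_imOn_compl _ L, imOn_eq_singleton hLne fun x hx => if_pos hx,
    imOn_congr (B := Lᶜ) (g := g) fun _ hx => if_neg hx, imOn_eq_pIm_of_pDom_subset hgD, hgX,
    singleton_union, insert_sdiff_singleton, insert_eq_of_mem hx₀]

end WilsonMonoid

theorem stmt16_general {V : Type*} [Fintype V] (l d : ℕ) (hl : 3 ≤ l)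
    (hcard : Fintype.card V = l + d) (L : Set V) (hL : L.ncard = l)
    (X : Set V) :
    (∃ f : V → Option V, MemW L l f ∧ pIm f = X) ↔ (L ⊆ X ∨ X.ncard ≤ d + 1) := by
  have hLc : Lᶜ.ncard = d := by
    have := ncard_add_ncard_compl L
    rw [Nat.card_eq_fintype_card, hcard, hL] at this
    omega
  have hLne : L.Nonempty := by
    rw [← ncard_pos]
    omega
  constructor
  · rintro ⟨f, hf, rfl⟩
    exact hLc ▸ hf.subset_pIm_or_ncard_pIm_le
  · rintro (hLX | hX)
    · exact exists_memW_pIm_eq_of_subset hL hLX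
    · exact exists_memW_pIm_eq_of_ncard_le hL hLne (hLc ▸ hX)

theorem stmt16 {V : Type*} [Fintype V] (l d : ℕ) (hl : 3 ≤ l) (hd : 1 ≤ d)
    (hcard : Fintype.card V = l + d) (L : Set V) (hL : L.ncard = l)
    (X : Set V) :
    (∃ f : V → Option V, MemW L l f ∧ pIm f = X) ↔ (L ⊆ X ∨ X.ncard ≤ d + 1) :=
  stmt16_general l d hl hcard L hL X
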